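/- With the setup of the appendix, for every φ ∈ ℝ: u_Rᵀ·R_R(π+φ)·R_L(π+φ)·Ω_L·Ω_R·u_L = -4 r² (1-r²) cos φ, and u_Rᵀ·R_L(π+φ)·Ω_R²·u_L = 4 r² (1-r²)(1-2r²)(1 + cos φ). -/

import Mathlib

/-!
Both matrices are cross-product matrices, `Ω_L v = v ⨯ u_L` and `Ω_R v = v ⨯ u_R`, of unit
vectors, so `Ω³ = -Ω` and Rodrigues' formula `exp (θ Ω) = 1 + sin θ Ω + (1 - cos θ) Ω²` holds.
Pushing `u_R` through from the left, `u_R R_R = u_R` and `u_R Ω_L = Ω_R u_L = u_L ⨯ u_R =: n`,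
so both quantities reduce to triple and quadruple products: the first is `cos (π + φ) |n|²`, the
second `-(1 - cos (π + φ)) (u_L ⬝ u_R) |n|²`, with `u_L ⬝ u_R = 2r² - 1` and
`|n|² = 1 - (u_L ⬝ u_R)² = 4r²(1 - r²)`.
-/

open Matrix Real

section Rodrigues

variable {𝔸 : Type*} [NormedRing 𝔸] [NormedAlgebra ℝ 𝔸] {Ω : 𝔸}

theorem hasDerivAt_rodrigues (hΩ : Ω * Ω * Ω = -Ω) (t : ℝ) :
    HasDerivAt (fun s : ℝ => 1 + sin s • Ω + (1 - cos s) • (Ω * Ω))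
      ((1 + sin t • Ω + (1 - cos t) • (Ω * Ω)) * Ω) t := by
  refine ((((hasDerivAt_sin t).smul_const Ω).const_add 1).add
    (((hasDerivAt_cos t).const_sub 1).smul_const (Ω * Ω))).congr_deriv ?_
  rw [add_mul, add_mul, one_mul, smul_mul_assoc, smul_mul_assoc, hΩ, neg_neg, sub_smul, one_smul,
    smul_neg]
  abel

variable [CompleteSpace 𝔸]

theorem exp_smul_of_cube_eq_neg (hΩ : Ω * Ω * Ω = -Ω) (θ : ℝ) :
    NormedSpace.exp (θ • Ω) = 1 + sin θ • Ω + (1 - cos θ) • (Ω * Ω) := by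
  set A : ℝ → 𝔸 := fun s => 1 + sin s • Ω + (1 - cos s) • (Ω * Ω)
  have hcomm (s : ℝ) : Commute Ω (A s) :=
    ((Commute.one_right Ω).add_right ((Commute.refl Ω).smul_right _)).add_right
      (((Commute.refl Ω).mul_right (Commute.refl Ω)).smul_right _)
  -- `s ↦ exp ((θ - s) Ω) A s` is constant, since `A' = A Ω` and `Ω` commutes with `A`.
  have hderiv (s : ℝ) :
      HasDerivAt (fun s => NormedSpace.exp ((θ - s) • Ω) * A s) 0 s := by
    refine (((hasDerivAt_exp_smul_const Ω (θ - s)).scomp s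
      ((hasDerivAt_id s).const_sub θ)).mul (hasDerivAt_rodrigues hΩ s)).congr_deriv ?_
    change -1 • (_ * Ω) * A s + _ * (A s * Ω) = 0
    rw [← (hcomm s).eq, neg_one_smul, neg_mul, mul_assoc]
    exact neg_add_cancel _
  have hconst := is_const_of_deriv_eq_zero (fun s => (hderiv s).differentiableAt)
    (fun s => (hderiv s).deriv) 0 θ
  simpa [A] using hconst

theorem exp_smul_mul_of_cube_eq_neg (hΩ : Ω * Ω * Ω = -Ω) (θ : ℝ) :
    NormedSpace.exp (θ • Ω) * Ω = cos θ • Ω + sin θ • (Ω * Ω) := by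
  rw [exp_smul_of_cube_eq_neg hΩ, add_mul, add_mul, one_mul, smul_mul_assoc, smul_mul_assoc, hΩ,
    smul_neg, sub_smul, one_smul]
  abel

end Rodrigues

section CrossMatrix

variable {R : Type*} [CommRing R]

def crossMatrix (w : Fin 3 → R) : Matrix (Fin 3) (Fin 3) R :=
  !![0, w 2, -w 1; -w 2, 0, w 0; w 1, -w 0, 0]

theorem crossMatrix_mulVec (w v : Fin 3 → R) : crossMatrix w *ᵥ v = v ⨯₃ w := by
  ext i
  fin_cases i <;> simp [crossMatrix, cross_apply, mulVec, dotProduct, Fin.sum_univ_three] <;> ring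

theorem vecMul_crossMatrix (w v : Fin 3 → R) : v ᵥ* crossMatrix w = w ⨯₃ v := by
  ext i
  fin_cases i <;> simp [crossMatrix, cross_apply, vecMul, dotProduct, Fin.sum_univ_three] <;> ring

theorem crossMatrix_mul_mul_self (w : Fin 3 → R) :
    crossMatrix w * crossMatrix w * crossMatrix w = -(w ⬝ᵥ w) • crossMatrix w := by
  ext i j
  fin_cases i <;> fin_cases j <;>
    simp [crossMatrix, Matrix.mul_apply, dotProduct, Fin.sum_univ_three] <;> ring

theorem crossMatrix_mul_mul_self_of_dotProduct_self {w : Fin 3 → R} (hw : w ⬝ᵥ w = 1) :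
    crossMatrix w * crossMatrix w * crossMatrix w = -crossMatrix w := by
  rw [crossMatrix_mul_mul_self, hw, neg_smul, one_smul]

end CrossMatrix

section UnitCrossMatrix

-- The operator norm only serves to apply the Rodrigues lemmas; the statements below mention
-- `NormedSpace.exp` with the product topology of `Matrix`, which is defeq but not syntactically
-- equal to the one induced by the norm.
attribute [local instance] Matrix.linftyOpNormedRing Matrix.linftyOpNormedAlgebra

variable {u v : Fin 3 → ℝ}

theorem exp_smul_crossMatrix (hu : u ⬝ᵥ u = 1) (θ : ℝ) :
    NormedSpace.exp (θ • crossMatrix u) =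
      1 + sin θ • crossMatrix u + (1 - cos θ) • (crossMatrix u * crossMatrix u) :=
  exp_smul_of_cube_eq_neg (crossMatrix_mul_mul_self_of_dotProduct_self hu) θ

theorem exp_smul_crossMatrix_mul (hu : u ⬝ᵥ u = 1) (θ : ℝ) :
    NormedSpace.exp (θ • crossMatrix u) * crossMatrix u =
      cos θ • crossMatrix u + sin θ • (crossMatrix u * crossMatrix u) :=
  exp_smul_mul_of_cube_eq_neg (crossMatrix_mul_mul_self_of_dotProduct_self hu) θ

theorem vecMul_exp_smul_crossMatrix (hu : u ⬝ᵥ u = 1) (θ : ℝ) (v : Fin 3 → ℝ) :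
    v ᵥ* NormedSpace.exp (θ • crossMatrix u) =
      v + sin θ • (u ⨯₃ v) + (1 - cos θ) • (u ⨯₃ (u ⨯₃ v)) := by
  rw [exp_smul_crossMatrix hu]
  simp [vecMul_add, vecMul_smul, ← vecMul_vecMul, vecMul_crossMatrix]

theorem dotProduct_exp_mul_exp_mul_crossMatrix_mul_crossMatrix_mulVec (hu : u ⬝ᵥ u = 1)
    (hv : v ⬝ᵥ v = 1) (θ : ℝ) :
    v ⬝ᵥ (NormedSpace.exp (θ • crossMatrix v) * NormedSpace.exp (θ • crossMatrix u) *
      crossMatrix u * crossMatrix v) *ᵥ u = cos θ * (u ⨯₃ v ⬝ᵥ u ⨯₃ v) := by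
  have hv_fixed : v ᵥ* NormedSpace.exp (θ • crossMatrix v) = v := by
    rw [vecMul_exp_smul_crossMatrix hv, cross_self, map_zero, smul_zero, smul_zero, add_zero,
      add_zero]
  rw [mul_assoc _ (NormedSpace.exp _), exp_smul_crossMatrix_mul hu, ← mulVec_mulVec,
    ← mulVec_mulVec, dotProduct_mulVec, hv_fixed, dotProduct_mulVec, crossMatrix_mulVec,
    vecMul_add, vecMul_smul, vecMul_smul, ← vecMul_vecMul, vecMul_crossMatrix, vecMul_crossMatrix,
    add_dotProduct, smul_dotProduct, smul_dotProduct, dotProduct_comm (u ⨯₃ (u ⨯₃ v)),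
    dot_cross_self, smul_zero, add_zero, smul_eq_mul]

theorem dotProduct_exp_mul_crossMatrix_mul_crossMatrix_mulVec (hu : u ⬝ᵥ u = 1) (θ : ℝ) :
    v ⬝ᵥ (NormedSpace.exp (θ • crossMatrix u) * crossMatrix v * crossMatrix v) *ᵥ u =
      -((1 - cos θ) * (u ⬝ᵥ v) * (u ⨯₃ v ⬝ᵥ u ⨯₃ v)) := by
  rw [← mulVec_mulVec, ← mulVec_mulVec, dotProduct_mulVec, vecMul_exp_smul_crossMatrix hu,
    crossMatrix_mulVec, crossMatrix_mulVec, add_dotProduct, add_dotProduct, dot_cross_self,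
    smul_dotProduct, dot_self_cross, smul_dotProduct, cross_dot_cross, dot_self_cross]
  simp only [smul_eq_mul]
  ring

end UnitCrossMatrix

theorem stmt_16 (r : ℝ) (hr : r ∈ Set.Ioo (0:ℝ) 1) (φ : ℝ) :
    let kx : ℝ := Real.sqrt (1 - r ^ 2)
    let ΩL : Matrix (Fin 3) (Fin 3) ℝ := !![0, r, 0; -r, 0, kx; 0, -kx, 0]
    let ΩR : Matrix (Fin 3) (Fin 3) ℝ := !![0, r, 0; -r, 0, -kx; 0, kx, 0]
    let uL : Fin 3 → ℝ := ![kx, 0, r]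
    let uR : Fin 3 → ℝ := ![-kx, 0, r]
    let RL : ℝ → Matrix (Fin 3) (Fin 3) ℝ := fun θ => NormedSpace.exp (θ • ΩL)
    let RR : ℝ → Matrix (Fin 3) (Fin 3) ℝ := fun θ => NormedSpace.exp (θ • ΩR)
    uR ⬝ᵥ (RR (π + φ) * RL (π + φ) * ΩL * ΩR).mulVec uL
      = -(4 * r ^ 2 * (1 - r ^ 2)) * Real.cos φ ∧
    uR ⬝ᵥ (RL (π + φ) * ΩR * ΩR).mulVec uL
      = 4 * r ^ 2 * (1 - r ^ 2) * (1 - 2 * r ^ 2) * (1 + Real.cos φ) := by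
  intro kx ΩL ΩR uL uR RL RR
  have hkx : kx ^ 2 = 1 - r ^ 2 := sq_sqrt (by nlinarith [hr.1, hr.2])
  have hΩL : ΩL = crossMatrix uL := by
    ext i j; fin_cases i <;> fin_cases j <;> simp [ΩL, uL, crossMatrix]
  have hΩR : ΩR = crossMatrix uR := by
    ext i j; fin_cases i <;> fin_cases j <;> simp [ΩR, uR, crossMatrix]
  have huL : uL ⬝ᵥ uL = 1 := by
    rw [vec3_dotProduct]
    show kx * kx + 0 * 0 + r * r = 1
    linear_combination hkx
  have huR : uR ⬝ᵥ uR = 1 := by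
    rw [vec3_dotProduct]
    show -kx * -kx + 0 * 0 + r * r = 1
    linear_combination hkx
  have hdot : uL ⬝ᵥ uR = 2 * r ^ 2 - 1 := by
    rw [vec3_dotProduct]
    show kx * -kx + 0 * 0 + r * r = 2 * r ^ 2 - 1
    linear_combination -hkx
  have hcross : uL ⨯₃ uR ⬝ᵥ uL ⨯₃ uR = 4 * r ^ 2 * (1 - r ^ 2) := by
    rw [cross_dot_cross, huL, huR, dotProduct_comm uR, hdot]; ring
  simp only [RL, RR, hΩL, hΩR]
  rw [dotProduct_exp_mul_exp_mul_crossMatrix_mul_crossMatrix_mulVec huL huR,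
    dotProduct_exp_mul_crossMatrix_mul_crossMatrix_mulVec huL, hcross, hdot, add_comm π,
    cos_add_pi]
  constructor <;> ring
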